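/- The operators H_t f = z̄∂_{z̄}f − z∂_z f + (1/2)(q² − ∂_q²)f, X_t f = i z̄ ∂_z f + (i/4)(q−∂_q)² f, and Y_t f = −i z ∂_{z̄} f + (i/4)(q+∂_q)² f act on the even basis of symplectic monogenics by: H_t s_{e,k}^h = (h + 2k + 1/2) s_{e,k}^h; X_t s_{e,k}^h = i(h+k+1) s_{e,k+1}^h; Y_t s_{e,k}^h = i(k − 1/2) s_{e,k−1}^h for k ≠ −h; and Y_t s_{e,−h}^h = 0 (for all integers k with −h ≤ k). -/

import Mathlib

noncomputable section

open Complex Finset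

/-- Points `(x, y, q)` of `ℝ³`. -/
abbrev P3 := ℝ × ℝ × ℝ

/-- Partial derivative with respect to `x`. -/
def pdx (f : P3 → ℂ) : P3 → ℂ := fun p => deriv (fun t => f (t, p.2.1, p.2.2)) p.1

/-- Partial derivative with respect to `y`. -/
def pdy (f : P3 → ℂ) : P3 → ℂ := fun p => deriv (fun t => f (p.1, t, p.2.2)) p.2.1

/-- Partial derivative with respect to `q`. -/
def pdq (f : P3 → ℂ) : P3 → ℂ := fun p => deriv (fun t => f (p.1, p.2.1, t)) p.2.2

/-- The symplectic Dirac operator `D_s f = i q ∂_y f − ∂_x ∂_q f`. -/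
def Ds (f : P3 → ℂ) : P3 → ℂ := fun p =>
  Complex.I * (p.2.2 : ℂ) * pdy f p - pdx (pdq f) p

/-- The operator `X_s f = y ∂_q f + i x q f`. -/
def Xs (f : P3 → ℂ) : P3 → ℂ := fun p =>
  (p.2.1 : ℂ) * pdq f p + Complex.I * (p.1 : ℂ) * (p.2.2 : ℂ) * f p

/-- The Euler operator `E f = x ∂_x f + y ∂_y f`. -/
def Eul (f : P3 → ℂ) : P3 → ℂ := fun p =>
  (p.1 : ℂ) * pdx f p + (p.2.1 : ℂ) * pdy f p

/-- The complex coordinate `z = x + iy`. -/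
def zc (r : P3) : ℂ := (r.1 : ℂ) + Complex.I * (r.2.1 : ℂ)

/-- The complex coordinate `z̄ = x − iy`. -/
def zbc (r : P3) : ℂ := (r.1 : ℂ) - Complex.I * (r.2.1 : ℂ)

/-- The Wirtinger derivative `∂_z = (∂_x − i ∂_y)/2`. -/
def pdz (f : P3 → ℂ) : P3 → ℂ := fun p => (pdx f p - Complex.I * pdy f p) / 2

/-- The Wirtinger derivative `∂_{z̄} = (∂_x + i ∂_y)/2`. -/
def pdzbar (f : P3 → ℂ) : P3 → ℂ := fun p => (pdx f p + Complex.I * pdy f p) / 2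

/-- The physicists' Hermite polynomial `H_k(q) = (−1)^k e^{q²} (d/dq)^k e^{−q²}`. -/
def hermiteP (k : ℕ) (q : ℝ) : ℝ :=
  (-1 : ℝ) ^ k * Real.exp (q ^ 2) * (deriv^[k] fun t : ℝ => Real.exp (-t ^ 2)) q

/-- The `k`-th Hermite function `ψ_k(q) = (2^k k! √π)^{−1/2} e^{−q²/2} H_k(q)`. -/
def psiH (k : ℕ) (q : ℝ) : ℝ :=
  (Real.sqrt (2 ^ k * (Nat.factorial k : ℝ) * Real.sqrt Real.pi))⁻¹ *
    Real.exp (-q ^ 2 / 2) * hermiteP k q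

/-- The double factorial `m!!` of an integer, with the convention `m!! = 1` for `m ≤ 0`
(in particular `(−1)!! = 1`). -/
def dfac (m : ℤ) : ℝ := if m ≤ 0 then 1 else (Nat.doubleFactorial m.toNat : ℝ)

/-- The even basis element
`s_{e,k}^h = Σ_p √((2k+2p−1)!!/(2k+2p)!!) binom(h,p) ψ_{2k+2p}(q) z̄^{h−p} z^p`, where
the sum runs over `max(0, −k) ≤ p ≤ h` (i.e. over `0 ≤ p ≤ h` if `k ≥ 0`, and over
`|k| ≤ p ≤ h` if `−h ≤ k ≤ −1`). -/
def sE (h : ℕ) (k : ℤ) : P3 → ℂ := fun r =>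
  ∑ p ∈ Finset.Icc (-k).toNat h,
    (Real.sqrt (dfac (2 * k + 2 * (p : ℤ) - 1) / dfac (2 * k + 2 * (p : ℤ))) : ℂ) *
      (h.choose p : ℂ) * (psiH (2 * k + 2 * (p : ℤ)).toNat r.2.2 : ℂ) *
        (zbc r) ^ (h - p) * (zc r) ^ p

/-- The odd basis element
`s_{o,k}^h = Σ_{p=0}^h √((2k+2p)!!/(2k+2p+1)!!) binom(h,p) ψ_{2k+2p+1}(q) z̄^{h−p} z^p`. -/
def sO (h k : ℕ) : P3 → ℂ := fun r =>
  ∑ p ∈ Finset.range (h + 1),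
    (Real.sqrt ((Nat.doubleFactorial (2 * k + 2 * p) : ℝ) /
        (Nat.doubleFactorial (2 * k + 2 * p + 1) : ℝ)) : ℂ) *
      (h.choose p : ℂ) * (psiH (2 * k + 2 * p + 1) r.2.2 : ℂ) *
        (zbc r) ^ (h - p) * (zc r) ^ p

/-- The operator `q − ∂_q` (acting in the Schwartz variable). -/
def Qm (f : P3 → ℂ) : P3 → ℂ := fun p => (p.2.2 : ℂ) * f p - pdq f p

/-- The operator `q + ∂_q` (acting in the Schwartz variable). -/
def Qp (f : P3 → ℂ) : P3 → ℂ := fun p => (p.2.2 : ℂ) * f p + pdq f p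

/-- The operator `H_t f = z̄∂_{z̄}f − z∂_z f + (1/2)(q² − ∂_q²)f`. -/
def Htc (f : P3 → ℂ) : P3 → ℂ := fun p =>
  zbc p * pdzbar f p - zc p * pdz f p +
    (1 / 2) * ((p.2.2 : ℂ) ^ 2 * f p - pdq (pdq f) p)

/-- The operator `X_t f = i z̄ ∂_z f + (i/4)(q−∂_q)² f`. -/
def Xtc (f : P3 → ℂ) : P3 → ℂ := fun p =>
  Complex.I * zbc p * pdz f p + (Complex.I / 4) * Qm (Qm f) p

/-- The operator `Y_t f = −i z ∂_{z̄} f + (i/4)(q+∂_q)² f`. -/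
def Ytc (f : P3 → ℂ) : P3 → ℂ := fun p =>
  -Complex.I * zc p * pdzbar f p + (Complex.I / 4) * Qp (Qp f) p


/-!
Each `s_{e,k}^h` is a binomial sum `∑_p binom(h,p) φ_p(q) z̄^{h−p} z^p` with profiles
`φ_p = c_n ψ_n`, `n = 2k + 2p`, `c_n = √((n−1)!!/n!!)`, and `φ_p = 0` when `n < 0`.
On binomial sums `z̄∂_{z̄}` and `z∂_z` multiply the `p`-th term by `h − p` and `p`, while
`z̄∂_z` and `z∂_{z̄}` shift `p` by one, because `(p+1) binom(h,p+1) = (h−p) binom(h,p)`.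
The `q`-parts act on each profile through the Hermite ladder `(q−∂)ψ_n = √(2n+2) ψ_{n+1}`,
`(q+∂)ψ_n = √(2n) ψ_{n−1}`, and the weights `c_n` are exactly those for which
`(q−∂)²(c_n ψ_n) = 2(n+2) c_{n+2} ψ_{n+2}` and `(q+∂)²(c_n ψ_n) = 2(n−1) c_{n−2} ψ_{n−2}`.
The coefficient of the `p`-th term then comes out independent of `p`.
-/

open Polynomial in
def physHermite : ℕ → ℝ[X]
  | 0 => 1
  | n + 1 => 2 * X * physHermite n - derivative (physHermite n)

open Polynomial in
lemma derivative_physHermite_succ (n : ℕ) :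
    derivative (physHermite (n + 1)) = 2 * ((n : ℝ[X]) + 1) * physHermite n := by
  induction n with
  | zero => simp [physHermite]
  | succ n ih =>
    have hrec : physHermite (n + 2) =
        2 * X * physHermite (n + 1) - derivative (physHermite (n + 1)) := rfl
    rw [hrec, derivative_sub, derivative_mul, ih]
    simp only [physHermite, derivative_mul, derivative_add, derivative_ofNat, derivative_X,
      derivative_natCast, derivative_one, Nat.cast_add, Nat.cast_one]
    ring

lemma iterate_deriv_gaussian (n : ℕ) :
    (deriv^[n] fun t : ℝ => Real.exp (-t ^ 2)) =
      fun q => (-1) ^ n * (physHermite n).eval q * Real.exp (-q ^ 2) := by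
  induction n with
  | zero => funext q; simp [physHermite]
  | succ n ih =>
    rw [Function.iterate_succ_apply', ih]
    funext q
    have hexp : HasDerivAt (fun t : ℝ => Real.exp (-t ^ 2)) (Real.exp (-q ^ 2) * (-(2 * q))) q := by
      simpa using ((hasDerivAt_pow 2 q).neg).exp
    have := (((physHermite n).hasDerivAt q).fun_mul hexp).const_mul ((-1 : ℝ) ^ n)
    simp only [← mul_assoc] at this
    rw [this.deriv, physHermite]
    simp only [Polynomial.eval_sub, Polynomial.eval_mul, Polynomial.eval_X, Polynomial.eval_ofNat]
    ring

lemma hermiteP_eq_eval (n : ℕ) (q : ℝ) : hermiteP n q = (physHermite n).eval q := by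
  have hexp : Real.exp (q ^ 2) * Real.exp (-q ^ 2) = 1 := by rw [← Real.exp_add]; simp
  have hsign : (-1 : ℝ) ^ n * (-1) ^ n = 1 := by rw [← pow_add]; exact Even.neg_one_pow ⟨n, rfl⟩
  rw [hermiteP, iterate_deriv_gaussian]
  linear_combination (physHermite n).eval q * (hexp + Real.exp (q ^ 2) * Real.exp (-q ^ 2) * hsign)

def hermiteNorm (m : ℕ) : ℝ := (√(2 ^ m * (m.factorial : ℝ) * √Real.pi))⁻¹

lemma psiH_eq (m : ℕ) :
    psiH m = fun q => hermiteNorm m * (Real.exp (-q ^ 2 / 2) * (physHermite m).eval q) := by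
  funext q
  rw [psiH, hermiteP_eq_eval, hermiteNorm, mul_assoc]

lemma hermiteNorm_eq_mul_succ (m : ℕ) :
    hermiteNorm m = √(2 * (m + 1)) * hermiteNorm (m + 1) := by
  have hsucc : (2 : ℝ) ^ (m + 1) * ((m + 1).factorial : ℝ) * √Real.pi =
      2 * (m + 1) * (2 ^ m * (m.factorial : ℝ) * √Real.pi) := by
    push_cast [Nat.factorial_succ, pow_succ]
    ring
  have hpos : 0 < √(2 * ((m : ℝ) + 1)) := by positivity
  rw [hermiteNorm, hermiteNorm, hsucc,
    Real.sqrt_mul (by positivity : (0 : ℝ) ≤ 2 * (m + 1)), mul_inv, mul_inv_cancel_left₀ hpos.ne']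

lemma contDiff_psiH (m : ℕ) {n : WithTop ℕ∞} : ContDiff ℝ n (psiH m) := by
  have := (physHermite m).contDiff_aeval (𝕜 := ℝ) n
  simp only [Polynomial.coe_aeval_eq_eval] at this
  rw [psiH_eq]
  fun_prop

lemma hasDerivAt_psiH (m : ℕ) (q : ℝ) :
    HasDerivAt (psiH m) (hermiteNorm m * (Real.exp (-q ^ 2 / 2) *
      ((Polynomial.derivative (physHermite m)).eval q - q * (physHermite m).eval q))) q := by
  have hexp := (((hasDerivAt_pow 2 q).fun_neg).div_const 2).exp
  rw [psiH_eq]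
  refine ((hexp.fun_mul ((physHermite m).hasDerivAt q)).const_mul (hermiteNorm m)).congr_deriv ?_
  simp only [Nat.cast_ofNat, Nat.add_one_sub_one, pow_one]
  ring

-- Unnormalised ladder operators: the usual factor `1/√2` is omitted.
def creation (φ : ℝ → ℝ) : ℝ → ℝ := fun q => q * φ q - deriv φ q

def annihilation (φ : ℝ → ℝ) : ℝ → ℝ := fun q => q * φ q + deriv φ q

lemma creation_psiH (m : ℕ) :
    creation (psiH m) = fun q => √(2 * (m + 1)) * psiH (m + 1) q := by
  funext q
  rw [creation, (hasDerivAt_psiH m q).deriv]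
  simp only [psiH_eq, hermiteNorm_eq_mul_succ m, physHermite, Polynomial.eval_sub,
    Polynomial.eval_mul, Polynomial.eval_X, Polynomial.eval_ofNat]
  ring

lemma annihilation_psiH (m : ℕ) :
    annihilation (psiH m) = fun q => √(2 * m) * psiH (m - 1) q := by
  funext q
  rw [annihilation, (hasDerivAt_psiH m q).deriv]
  cases m with
  | zero =>
    simp only [psiH_eq, physHermite, Polynomial.eval_one, Polynomial.derivative_one,
      Polynomial.eval_zero, CharP.cast_eq_zero, mul_zero, Real.sqrt_zero, zero_mul]
    ring
  | succ m =>
    have hsq : √(2 * ((m : ℝ) + 1)) * √(2 * ((m : ℝ) + 1)) = 2 * (m + 1) :=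
      Real.mul_self_sqrt (by positivity)
    simp only [psiH_eq, derivative_physHermite_succ, Nat.add_sub_cancel,
      hermiteNorm_eq_mul_succ m, Polynomial.eval_mul, Polynomial.eval_add,
      Polynomial.eval_natCast, Polynomial.eval_one, Polynomial.eval_ofNat]
    push_cast
    linear_combination -(hermiteNorm (m + 1) * Real.exp (-q ^ 2 / 2) *
      (physHermite m).eval q) * hsq

lemma creation_const_mul (c : ℝ) (φ : ℝ → ℝ) :
    creation (fun q => c * φ q) = fun q => c * creation φ q := by
  funext q
  simp only [creation, deriv_const_mul_field']
  ring

lemma annihilation_const_mul (c : ℝ) (φ : ℝ → ℝ) :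
    annihilation (fun q => c * φ q) = fun q => c * annihilation φ q := by
  funext q
  simp only [annihilation, deriv_const_mul_field']
  ring

lemma creation_zero : creation 0 = 0 := by
  funext q
  simp [creation]

lemma annihilation_zero : annihilation 0 = 0 := by
  funext q
  simp [annihilation]

lemma annihilation_creation_apply {φ : ℝ → ℝ} (hφ : ContDiff ℝ 2 φ) (q : ℝ) :
    annihilation (creation φ) q = q ^ 2 * φ q - deriv (deriv φ) q + φ q := by
  have hd : Differentiable ℝ φ := hφ.differentiable two_ne_zero
  have hd' : Differentiable ℝ (deriv φ) := (hφ.deriv' (n := 1)).differentiable one_ne_zero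
  have hcre : HasDerivAt (creation φ) (φ q + q * deriv φ q - deriv (deriv φ) q) q :=
    (((hasDerivAt_id' q).fun_mul (hd q).hasDerivAt).fun_sub (hd' q).hasDerivAt).congr_deriv
      (by ring)
  rw [annihilation, hcre.deriv, creation]
  ring

lemma sq_mul_sub_deriv_deriv_psiH (m : ℕ) (q : ℝ) :
    q ^ 2 * psiH m q - deriv (deriv (psiH m)) q = (2 * m + 1) * psiH m q := by
  have hsq : √(2 * ((m : ℝ) + 1)) * √(2 * ((m : ℝ) + 1)) = 2 * (m + 1) :=
    Real.mul_self_sqrt (by positivity)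
  have h := annihilation_creation_apply (contDiff_psiH m) q
  rw [creation_psiH, annihilation_const_mul, annihilation_psiH] at h
  push_cast at h
  linear_combination -h + psiH m q * hsq

lemma dfac_pos (m : ℤ) : 0 < dfac m := by
  unfold dfac
  split
  · exact one_pos
  · exact_mod_cast Nat.doubleFactorial_pos _

lemma dfac_add_two {m : ℤ} (hm : -1 ≤ m) : dfac (m + 2) = (m + 2) * dfac m := by
  obtain ⟨n, rfl | rfl⟩ : ∃ n : ℕ, m = n ∨ m = -1 := ⟨m.toNat, by omega⟩
  · rw [dfac, if_neg (by omega), show ((n : ℤ) + 2).toNat = n + 2 by omega,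
      Nat.doubleFactorial_add_two]
    rcases n.eq_zero_or_pos with rfl | hn
    · simp [dfac]
    · rw [dfac, if_neg (by omega), Int.toNat_natCast]
      push_cast
      ring
  · norm_num [dfac]

def sqrtDfacRatio (n : ℤ) : ℝ := √(dfac (n - 1) / dfac n)

lemma sqrt_mul_sqrtDfacRatio_add_two {n : ℤ} (hn : 0 ≤ n) :
    √((n : ℝ) + 2) * sqrtDfacRatio (n + 2) = √((n : ℝ) + 1) * sqrtDfacRatio n := by
  have h1 : dfac (n + 2 - 1) = (n + 1) * dfac (n - 1) := by
    rw [show n + 2 - 1 = n - 1 + 2 by ring, dfac_add_two (by omega)]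
    push_cast
    ring
  have h2 := dfac_add_two (show -1 ≤ n by omega)
  have hpos := dfac_pos n
  have hn' : (0 : ℝ) ≤ n := by exact_mod_cast hn
  rw [sqrtDfacRatio, sqrtDfacRatio, ← Real.sqrt_mul (by positivity),
    ← Real.sqrt_mul (by positivity), h1, h2]
  congr 1
  field_simp

-- Extended by `0` to `n < 0`, so that the terms `p < −k` missing from `sE` become zero terms of a
-- sum over all `p ≤ h`.
def weightedHermite (n : ℤ) : ℝ → ℝ :=
  if n < 0 then 0 else fun q => sqrtDfacRatio n * psiH n.toNat q

lemma weightedHermite_of_neg {n : ℤ} (hn : n < 0) : weightedHermite n = 0 := if_pos hn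

lemma weightedHermite_of_nonneg {n : ℤ} (hn : 0 ≤ n) :
    weightedHermite n = fun q => sqrtDfacRatio n * psiH n.toNat q := if_neg (by omega)

lemma contDiff_weightedHermite (n : ℤ) {m : WithTop ℕ∞} : ContDiff ℝ m (weightedHermite n) := by
  unfold weightedHermite
  split
  · exact contDiff_const
  · exact contDiff_const.mul (contDiff_psiH _)

lemma sq_mul_sub_deriv_deriv_weightedHermite (n : ℤ) (q : ℝ) :
    q ^ 2 * weightedHermite n q - deriv (deriv (weightedHermite n)) q =
      (2 * n + 1) * weightedHermite n q := by
  rcases lt_or_ge n 0 with hn | hn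
  · simp [weightedHermite_of_neg hn]
  · have h := sq_mul_sub_deriv_deriv_psiH n.toNat q
    have hcast : ((n.toNat : ℕ) : ℝ) = n := by exact_mod_cast Int.toNat_of_nonneg hn
    rw [hcast] at h
    simp only [weightedHermite_of_nonneg hn, deriv_const_mul_field']
    linear_combination sqrtDfacRatio n * h

lemma creation_creation_weightedHermite {n : ℤ} (hn : n ≠ -1) :
    creation (creation (weightedHermite n)) = fun q => 2 * (n + 2) * weightedHermite (n + 2) q := by
  rcases lt_or_ge n 0 with hneg | hn0
  · rw [weightedHermite_of_neg hneg, creation_zero, creation_zero]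
    obtain rfl | hlt : n = -2 ∨ n + 2 < 0 := by omega
    · funext q; norm_num
    · funext q; simp [weightedHermite_of_neg hlt]
  obtain ⟨m, rfl⟩ : ∃ m : ℕ, n = m := ⟨n.toNat, by omega⟩
  have key := sqrt_mul_sqrtDfacRatio_add_two hn0
  have s2 : √2 * √2 = (2 : ℝ) := Real.mul_self_sqrt (by norm_num)
  have s3 : √((m : ℝ) + 2) * √((m : ℝ) + 2) = m + 2 := Real.mul_self_sqrt (by positivity)
  rw [weightedHermite_of_nonneg hn0, weightedHermite_of_nonneg (by omega),
    show ((m : ℤ) + 2).toNat = m + 1 + 1 by omega]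
  simp only [creation_const_mul, creation_psiH]
  funext q
  simp only [Int.toNat_natCast, Int.cast_natCast] at key ⊢
  push_cast
  rw [Real.sqrt_mul (by norm_num) ((m : ℝ) + 1), Real.sqrt_mul (by norm_num) ((m : ℝ) + 1 + 1),
    add_assoc, one_add_one_eq_two]
  linear_combination (sqrtDfacRatio m * √((m : ℝ) + 1) * √((m : ℝ) + 2) * psiH (m + 2) q) * s2
    - 2 * √((m : ℝ) + 2) * psiH (m + 2) q * key + 2 * sqrtDfacRatio (m + 2) * psiH (m + 2) q * s3

lemma annihilation_annihilation_weightedHermite (n : ℤ) :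
    annihilation (annihilation (weightedHermite n)) =
      fun q => 2 * (n - 1) * weightedHermite (n - 2) q := by
  rcases lt_or_ge n 0 with hneg | hn0
  · rw [weightedHermite_of_neg hneg, weightedHermite_of_neg (by omega), annihilation_zero,
      annihilation_zero]
    funext q; simp
  rw [weightedHermite_of_nonneg hn0]
  simp only [annihilation_const_mul, annihilation_psiH]
  rcases lt_or_ge n 2 with hlt | hge
  · rw [weightedHermite_of_neg (by omega)]
    funext q
    interval_cases n <;> simp
  obtain ⟨j, rfl⟩ : ∃ j : ℕ, n = j + 2 := ⟨(n - 2).toNat, by omega⟩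
  have key := sqrt_mul_sqrtDfacRatio_add_two (Int.natCast_nonneg j)
  have s2 : √2 * √2 = (2 : ℝ) := Real.mul_self_sqrt (by norm_num)
  have s3 : √((j : ℝ) + 1) * √((j : ℝ) + 1) = j + 1 := Real.mul_self_sqrt (by positivity)
  rw [weightedHermite_of_nonneg (by omega), show ((j : ℤ) + 2).toNat = j + 1 + 1 by omega,
    add_sub_cancel_right]
  funext q
  simp only [Int.toNat_natCast, Int.cast_natCast, Nat.add_sub_cancel] at key ⊢
  push_cast
  rw [Real.sqrt_mul (by norm_num) ((j : ℝ) + 1 + 1), Real.sqrt_mul (by norm_num) ((j : ℝ) + 1),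
    add_assoc, one_add_one_eq_two]
  linear_combination (sqrtDfacRatio (j + 2) * √((j : ℝ) + 1) * √((j : ℝ) + 2) * psiH j q) * s2
    + 2 * √((j : ℝ) + 1) * psiH j q * key + 2 * sqrtDfacRatio j * psiH j q * s3

def binomSum (h : ℕ) (φ : ℕ → ℝ → ℝ) : P3 → ℂ := fun r =>
  ∑ p ∈ range (h + 1), (h.choose p : ℂ) * (φ p r.2.2 : ℂ) * (zbc r ^ (h - p) * zc r ^ p)

lemma hasDerivAt_zbc_pow_mul_zc_pow_fst (a b : ℕ) (r : P3) :
    HasDerivAt (fun t : ℝ => zbc (t, r.2.1, r.2.2) ^ a * zc (t, r.2.1, r.2.2) ^ b)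
      (a * zbc r ^ (a - 1) * zc r ^ b + b * zbc r ^ a * zc r ^ (b - 1)) r.1 := by
  have hzbc : HasDerivAt (fun t : ℝ => zbc (t, r.2.1, r.2.2)) 1 r.1 :=
    ((hasDerivAt_id' r.1).ofReal_comp.sub_const (I * r.2.1)).congr_deriv (by simp)
  have hzc : HasDerivAt (fun t : ℝ => zc (t, r.2.1, r.2.2)) 1 r.1 :=
    ((hasDerivAt_id' r.1).ofReal_comp.add_const (I * r.2.1)).congr_deriv (by simp)
  exact ((hzbc.fun_pow a).fun_mul (hzc.fun_pow b)).congr_deriv (by ring)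

lemma hasDerivAt_zbc_pow_mul_zc_pow_snd (a b : ℕ) (r : P3) :
    HasDerivAt (fun t : ℝ => zbc (r.1, t, r.2.2) ^ a * zc (r.1, t, r.2.2) ^ b)
      (-I * a * zbc r ^ (a - 1) * zc r ^ b + I * b * zbc r ^ a * zc r ^ (b - 1)) r.2.1 := by
  have hzbc : HasDerivAt (fun t : ℝ => zbc (r.1, t, r.2.2)) (-I) r.2.1 :=
    (((hasDerivAt_id' r.2.1).ofReal_comp.const_mul I).const_sub (r.1 : ℂ)).congr_deriv (by simp)
  have hzc : HasDerivAt (fun t : ℝ => zc (r.1, t, r.2.2)) I r.2.1 :=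
    (((hasDerivAt_id' r.2.1).ofReal_comp.const_mul I).const_add (r.1 : ℂ)).congr_deriv (by simp)
  exact ((hzbc.fun_pow a).fun_mul (hzc.fun_pow b)).congr_deriv (by ring)

lemma natCast_mul_pow_sub_one_mul {R : Type*} [CommSemiring R] (n : ℕ) (u : R) :
    (n * u ^ (n - 1)) * u = n * u ^ n := by
  cases n <;> simp [pow_succ, mul_assoc]

lemma cast_choose_succ_mul {R : Type*} [CommRing R] {h p : ℕ} (hp : p ≤ h) :
    (h.choose (p + 1) : R) * (p + 1) = h.choose p * (h - p) := by
  have h := congrArg (Nat.cast : ℕ → R) (Nat.choose_succ_right_eq h p)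
  push_cast [Nat.cast_sub hp] at h
  exact h

section

variable {h : ℕ} {φ : ℕ → ℝ → ℝ}

lemma hasDerivAt_binomSum_fst (r : P3) :
    HasDerivAt (fun t => binomSum h φ (t, r.2.1, r.2.2)) (∑ p ∈ range (h + 1),
      (h.choose p : ℂ) * (φ p r.2.2 : ℂ) * ((h - p : ℕ) * zbc r ^ (h - p - 1) * zc r ^ p
        + p * zbc r ^ (h - p) * zc r ^ (p - 1))) r.1 :=
  HasDerivAt.fun_sum fun p _ =>
    (hasDerivAt_zbc_pow_mul_zc_pow_fst (h - p) p r).const_mul ((h.choose p : ℂ) * φ p r.2.2)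

lemma hasDerivAt_binomSum_snd (r : P3) :
    HasDerivAt (fun t => binomSum h φ (r.1, t, r.2.2)) (∑ p ∈ range (h + 1),
      (h.choose p : ℂ) * (φ p r.2.2 : ℂ) * (-I * (h - p : ℕ) * zbc r ^ (h - p - 1) * zc r ^ p
        + I * p * zbc r ^ (h - p) * zc r ^ (p - 1))) r.2.1 :=
  HasDerivAt.fun_sum fun p _ =>
    (hasDerivAt_zbc_pow_mul_zc_pow_snd (h - p) p r).const_mul ((h.choose p : ℂ) * φ p r.2.2)

lemma pdz_binomSum (r : P3) :
    pdz (binomSum h φ) r = ∑ p ∈ range (h + 1),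
      (h.choose p : ℂ) * (φ p r.2.2 : ℂ) * (p * zbc r ^ (h - p) * zc r ^ (p - 1)) := by
  rw [pdz, pdx, pdy, (hasDerivAt_binomSum_fst r).deriv, (hasDerivAt_binomSum_snd r).deriv,
    mul_sum, ← sum_sub_distrib, sum_div]
  refine sum_congr rfl fun p _ => ?_
  linear_combination ((h.choose p : ℂ) * φ p r.2.2 * (h - p : ℕ) * zbc r ^ (h - p - 1) * zc r ^ p
    - (h.choose p : ℂ) * φ p r.2.2 * p * zbc r ^ (h - p) * zc r ^ (p - 1)) * I_mul_I / 2

lemma pdzbar_binomSum (r : P3) :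
    pdzbar (binomSum h φ) r = ∑ p ∈ range (h + 1),
      (h.choose p : ℂ) * (φ p r.2.2 : ℂ) * ((h - p : ℕ) * zbc r ^ (h - p - 1) * zc r ^ p) := by
  rw [pdzbar, pdx, pdy, (hasDerivAt_binomSum_fst r).deriv, (hasDerivAt_binomSum_snd r).deriv,
    mul_sum, ← sum_add_distrib, sum_div]
  refine sum_congr rfl fun p _ => ?_
  linear_combination (-(h.choose p : ℂ) * φ p r.2.2 * (h - p : ℕ) * zbc r ^ (h - p - 1) * zc r ^ p
    + (h.choose p : ℂ) * φ p r.2.2 * p * zbc r ^ (h - p) * zc r ^ (p - 1)) * I_mul_I / 2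

lemma zc_mul_pdz_binomSum (r : P3) :
    zc r * pdz (binomSum h φ) r = binomSum h (fun p q => p * φ p q) r := by
  rw [pdz_binomSum, binomSum, mul_sum]
  refine sum_congr rfl fun p _ => ?_
  push_cast
  linear_combination (h.choose p : ℂ) * φ p r.2.2 * zbc r ^ (h - p) *
    natCast_mul_pow_sub_one_mul p (zc r)

lemma zbc_mul_pdzbar_binomSum (r : P3) :
    zbc r * pdzbar (binomSum h φ) r = binomSum h (fun p q => (h - p) * φ p q) r := by
  rw [pdzbar_binomSum, binomSum, mul_sum]
  refine sum_congr rfl fun p hp => ?_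
  have hcast : ((h - p : ℕ) : ℂ) = h - p := Nat.cast_sub (by simpa [Nat.lt_succ_iff] using hp)
  push_cast
  linear_combination (h.choose p : ℂ) * φ p r.2.2 * zc r ^ p *
    natCast_mul_pow_sub_one_mul (h - p) (zbc r) +
    (h.choose p : ℂ) * φ p r.2.2 * zbc r ^ (h - p) * zc r ^ p * hcast

lemma zbc_mul_pdz_binomSum (r : P3) :
    zbc r * pdz (binomSum h φ) r = binomSum h (fun p q => (h - p) * φ (p + 1) q) r := by
  rw [pdz_binomSum, binomSum, mul_sum, sum_range_succ', sum_range_succ]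
  simp only [Nat.cast_zero, zero_mul, mul_zero, sub_self, add_zero, Complex.ofReal_zero]
  refine sum_congr rfl fun p hp => ?_
  have hp : p < h := mem_range.1 hp
  have hc := cast_choose_succ_mul (R := ℂ) hp.le
  rw [show h - p = h - (p + 1) + 1 by omega, pow_succ, Nat.add_sub_cancel]
  push_cast
  linear_combination (φ (p + 1) r.2.2 * zbc r ^ (h - (p + 1)) * zbc r * zc r ^ p) * hc

lemma zc_mul_pdzbar_binomSum (r : P3) :
    zc r * pdzbar (binomSum h φ) r = binomSum h (fun p q => p * φ (p - 1) q) r := by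
  rw [pdzbar_binomSum, binomSum, mul_sum, sum_range_succ, sum_range_succ' _ h]
  simp only [Nat.sub_self, Nat.cast_zero, zero_mul, mul_zero, add_zero, Complex.ofReal_zero,
    Nat.add_sub_cancel]
  refine sum_congr rfl fun p hp => ?_
  have hp : p < h := mem_range.1 hp
  have hc := cast_choose_succ_mul (R := ℂ) hp.le
  rw [Nat.sub_sub, pow_succ]
  push_cast [Nat.cast_sub hp.le]
  linear_combination -(φ p r.2.2 * zbc r ^ (h - (p + 1)) * zc r ^ p * zc r) * hc

lemma pdq_binomSum (hφ : ∀ p, Differentiable ℝ (φ p)) :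
    pdq (binomSum h φ) = binomSum h (fun p => deriv (φ p)) := by
  funext r
  have hq : HasDerivAt (fun t => binomSum h φ (r.1, r.2.1, t)) _ r.2.2 := HasDerivAt.fun_sum
    fun p _ => (((hφ p r.2.2).hasDerivAt.ofReal_comp.const_mul (h.choose p : ℂ)).mul_const
      (zbc r ^ (h - p) * zc r ^ p))
  exact hq.deriv

lemma Qm_binomSum (hφ : ∀ p, Differentiable ℝ (φ p)) :
    Qm (binomSum h φ) = binomSum h (fun p => creation (φ p)) := by
  funext r
  simp only [Qm, pdq_binomSum hφ, binomSum, mul_sum, ← sum_sub_distrib, creation]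
  refine sum_congr rfl fun p _ => ?_
  push_cast
  ring

lemma Qp_binomSum (hφ : ∀ p, Differentiable ℝ (φ p)) :
    Qp (binomSum h φ) = binomSum h (fun p => annihilation (φ p)) := by
  funext r
  simp only [Qp, pdq_binomSum hφ, binomSum, mul_sum, ← sum_add_distrib, annihilation]
  refine sum_congr rfl fun p _ => ?_
  push_cast
  ring

lemma ContDiff.creation {ψ : ℝ → ℝ} {n : WithTop ℕ∞} (hψ : ContDiff ℝ (n + 1) ψ) :
    ContDiff ℝ n (creation ψ) :=
  (contDiff_id.mul hψ.of_succ).sub hψ.deriv'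

lemma ContDiff.annihilation {ψ : ℝ → ℝ} {n : WithTop ℕ∞} (hψ : ContDiff ℝ (n + 1) ψ) :
    ContDiff ℝ n (annihilation ψ) :=
  (contDiff_id.mul hψ.of_succ).add hψ.deriv'

lemma Htc_binomSum (hφ : ∀ p, ContDiff ℝ 2 (φ p)) (r : P3) :
    Htc (binomSum h φ) r = binomSum h (fun p q =>
      (h - 2 * p) * φ p q + (q ^ 2 * φ p q - deriv (deriv (φ p)) q) / 2) r := by
  have hd p : Differentiable ℝ (φ p) := (hφ p).differentiable two_ne_zero
  have hd' p : Differentiable ℝ (deriv (φ p)) := ((hφ p).deriv' (n := 1)).differentiable one_ne_zero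
  rw [Htc, zbc_mul_pdzbar_binomSum, zc_mul_pdz_binomSum, pdq_binomSum hd, pdq_binomSum hd']
  simp only [binomSum, mul_sum, ← sum_sub_distrib, ← sum_add_distrib]
  refine sum_congr rfl fun p _ => ?_
  push_cast
  ring

lemma Xtc_binomSum (hφ : ∀ p, ContDiff ℝ 2 (φ p)) (r : P3) :
    Xtc (binomSum h φ) r = I * binomSum h (fun p q =>
      (h - p) * φ (p + 1) q + creation (creation (φ p)) q / 4) r := by
  have hd p : Differentiable ℝ (φ p) := (hφ p).differentiable two_ne_zero
  have hd' p : Differentiable ℝ (creation (φ p)) :=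
    ((hφ p).creation (n := 1)).differentiable one_ne_zero
  rw [Xtc, mul_assoc, zbc_mul_pdz_binomSum, Qm_binomSum hd, Qm_binomSum hd']
  simp only [binomSum, mul_sum, ← sum_add_distrib]
  refine sum_congr rfl fun p _ => ?_
  push_cast
  ring

lemma Ytc_binomSum (hφ : ∀ p, ContDiff ℝ 2 (φ p)) (r : P3) :
    Ytc (binomSum h φ) r = I * binomSum h (fun p q =>
      -(p * φ (p - 1) q) + annihilation (annihilation (φ p)) q / 4) r := by
  have hd p : Differentiable ℝ (φ p) := (hφ p).differentiable two_ne_zero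
  have hd' p : Differentiable ℝ (annihilation (φ p)) :=
    ((hφ p).annihilation (n := 1)).differentiable one_ne_zero
  rw [Ytc, mul_assoc, zc_mul_pdzbar_binomSum, Qp_binomSum hd, Qp_binomSum hd']
  simp only [binomSum, mul_sum, ← sum_add_distrib]
  refine sum_congr rfl fun p _ => ?_
  push_cast
  ring

lemma binomSum_const_mul (c : ℝ) (r : P3) :
    binomSum h (fun p q => c * φ p q) r = c * binomSum h φ r := by
  simp only [binomSum, mul_sum]
  refine sum_congr rfl fun p _ => ?_
  push_cast
  ring

end

lemma sE_eq_binomSum (h : ℕ) (k : ℤ) :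
    sE h k = binomSum h (fun p => weightedHermite (2 * k + 2 * p)) := by
  funext r
  have hsub : Icc (-k).toNat h ⊆ range (h + 1) := fun p hp => by
    rw [mem_Icc] at hp
    rw [mem_range]
    omega
  rw [sE, binomSum, ← sum_subset hsub]
  · refine sum_congr rfl fun p hp => ?_
    rw [mem_Icc] at hp
    rw [weightedHermite_of_nonneg (by omega), sqrtDfacRatio]
    push_cast
    ring
  · intro p hpr hp
    rw [mem_range] at hpr
    rw [mem_Icc] at hp
    rw [weightedHermite_of_neg (by omega)]
    simp

lemma sE_apply_eq_zero_of_lt {h : ℕ} {k : ℤ} (hk : k < -h) (r : P3) : sE h k r = 0 := by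
  rw [sE, Icc_eq_empty (by omega), sum_empty]

lemma Htc_sE (h : ℕ) (k : ℤ) (r : P3) :
    Htc (sE h k) r = ((h : ℂ) + 2 * k + 1 / 2) * sE h k r := by
  calc Htc (sE h k) r
      = binomSum h (fun p q =>
          ((h : ℝ) + 2 * k + 1 / 2) * weightedHermite (2 * k + 2 * p) q) r := by
        rw [sE_eq_binomSum, Htc_binomSum fun p => contDiff_weightedHermite _]
        congr 1
        funext p q
        rw [sq_mul_sub_deriv_deriv_weightedHermite]
        push_cast
        ring
    _ = _ := by
        rw [binomSum_const_mul, sE_eq_binomSum]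
        push_cast
        ring

lemma Xtc_sE (h : ℕ) (k : ℤ) (r : P3) :
    Xtc (sE h k) r = I * ((h : ℂ) + k + 1) * sE h (k + 1) r := by
  calc Xtc (sE h k) r
      = I * binomSum h (fun p q =>
          ((h : ℝ) + k + 1) * weightedHermite (2 * (k + 1) + 2 * p) q) r := by
        rw [sE_eq_binomSum, Xtc_binomSum fun p => contDiff_weightedHermite _]
        congr 2
        funext p q
        rw [creation_creation_weightedHermite (by omega),
          show 2 * k + 2 * ((p + 1 : ℕ) : ℤ) = 2 * (k + 1) + 2 * p by push_cast; ring,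
          show 2 * k + 2 * p + 2 = 2 * (k + 1) + 2 * (p : ℤ) by ring]
        push_cast
        ring
    _ = _ := by
        rw [binomSum_const_mul, sE_eq_binomSum]
        push_cast
        ring

lemma Ytc_sE (h : ℕ) (k : ℤ) (r : P3) :
    Ytc (sE h k) r = I * ((k : ℂ) - 1 / 2) * sE h (k - 1) r := by
  calc Ytc (sE h k) r
      = I * binomSum h (fun p q =>
          ((k : ℝ) - 1 / 2) * weightedHermite (2 * (k - 1) + 2 * p) q) r := by
        rw [sE_eq_binomSum, Ytc_binomSum fun p => contDiff_weightedHermite _]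
        congr 2
        funext p q
        have hshift : (p : ℝ) * weightedHermite (2 * k + 2 * ((p - 1 : ℕ) : ℤ)) q =
            p * weightedHermite (2 * (k - 1) + 2 * p) q := by
          rcases p with _ | p
          · simp
          · rw [show 2 * k + 2 * ((p + 1 - 1 : ℕ) : ℤ) = 2 * (k - 1) + 2 * ((p + 1 : ℕ) : ℤ) by
              push_cast; omega]
        rw [hshift, annihilation_annihilation_weightedHermite,
          show 2 * k + 2 * p - 2 = 2 * (k - 1) + 2 * (p : ℤ) by ring]
        push_cast
        ring
    _ = _ := by
        rw [binomSum_const_mul, sE_eq_binomSum]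
        push_cast
        ring

theorem mp2_action_on_even_basis_general (h : ℕ) (k : ℤ) :
    (∀ p, Htc (sE h k) p = ((h : ℂ) + 2 * (k : ℂ) + 1 / 2) * sE h k p) ∧
    (∀ p, Xtc (sE h k) p = Complex.I * ((h : ℂ) + (k : ℂ) + 1) * sE h (k + 1) p) ∧
    (k ≠ -(h : ℤ) → ∀ p, Ytc (sE h k) p = Complex.I * ((k : ℂ) - 1 / 2) * sE h (k - 1) p) ∧
    (∀ p, Ytc (sE h (-(h : ℤ))) p = 0) := by
  refine ⟨Htc_sE h k, Xtc_sE h k, fun _ => Ytc_sE h k, fun r => ?_⟩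
  rw [Ytc_sE, sE_apply_eq_zero_of_lt (by omega), mul_zero]

/-- The operators `H_t`, `X_t`, `Y_t` act on the even basis of symplectic monogenics by
`H_t s_{e,k}^h = (h+2k+1/2) s_{e,k}^h`, `X_t s_{e,k}^h = i(h+k+1) s_{e,k+1}^h`,
`Y_t s_{e,k}^h = i(k−1/2) s_{e,k−1}^h` for `k ≠ −h`, and `Y_t s_{e,−h}^h = 0`. -/
theorem mp2_action_on_even_basis (h : ℕ) (k : ℤ) (hk : -(h : ℤ) ≤ k) :
    (∀ p, Htc (sE h k) p = ((h : ℂ) + 2 * (k : ℂ) + 1 / 2) * sE h k p) ∧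
    (∀ p, Xtc (sE h k) p = Complex.I * ((h : ℂ) + (k : ℂ) + 1) * sE h (k + 1) p) ∧
    (k ≠ -(h : ℤ) → ∀ p, Ytc (sE h k) p = Complex.I * ((k : ℂ) - 1 / 2) * sE h (k - 1) p) ∧
    (∀ p, Ytc (sE h (-(h : ℤ))) p = 0) :=
  mp2_action_on_even_basis_general h k
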